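/- arXiv:2011.15010 — 10 statements merged into one kernel-verified Lean document; each statement's English description precedes it below -/
import Mathlib

section
/- Let B be a subset of the grid {1,...,N}×{1,...,N} such that no four points of B form the corners of an axis-parallel rectangle (i.e., there do not exist i1≠i2 and j1≠j2 with all four points (i1,j1),(i1,j2),(i2,j1),(i2,j2) in B). Then |B| < √2 · N^(3/2). -/
/-!
Let `dᵢ` be the number of points of `B` in row `i`. Each row contributes `dᵢ (dᵢ - 1)` ordered
pairs of distinct columns, and a pair of columns can occur in at most one row, since two rows
sharing it would span a rectangle. Hence `∑ dᵢ² ≤ N² - N + |B|`, and Cauchy–Schwarz gives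
`|B|² ≤ N ∑ dᵢ² ≤ N (N² - N + |B|) < 2 N³`, using `|B| ≤ N²`.
-/

open Finset

section RectangleFree

variable {α β : Type*}

def IsRectangleFree (B : Finset (α × β)) : Prop :=
  ¬ ∃ i1 i2 j1 j2, i1 ≠ i2 ∧ j1 ≠ j2 ∧
    (i1, j1) ∈ B ∧ (i1, j2) ∈ B ∧ (i2, j1) ∈ B ∧ (i2, j2) ∈ B

variable [Fintype β] [DecidableEq α] [DecidableEq β]

def row (B : Finset (α × β)) (i : α) : Finset β := {j | (i, j) ∈ B}

@[simp]
lemma mem_row {B : Finset (α × β)} {i : α} {j : β} : j ∈ row B i ↔ (i, j) ∈ B := by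
  simp [row]

variable [Fintype α]

lemma sum_card_row (B : Finset (α × β)) : ∑ i, #(row B i) = #B := by
  rw [card_eq_sum_card_fiberwise (f := Prod.fst) (t := univ) fun _ _ => mem_univ _]
  refine sum_congr rfl fun i _ => ?_
  rw [← card_image_of_injective _ (Prod.mk_right_injective i)]
  congr 1
  ext ⟨i', j⟩
  simp only [mem_image, mem_filter, mem_row, Prod.mk.injEq]
  constructor
  · rintro ⟨j', hj', rfl, rfl⟩
    exact ⟨hj', rfl⟩
  · rintro ⟨hB, rfl⟩
    exact ⟨j, hB, rfl, rfl⟩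

namespace IsRectangleFree

variable {B : Finset (α × β)}

lemma pairwiseDisjoint_offDiag_row (hB : IsRectangleFree B) :
    ((univ : Finset α) : Set α).PairwiseDisjoint fun i => (row B i).offDiag := by
  intro i1 _ i2 _ hi
  refine disjoint_left.2 fun ⟨j1, j2⟩ h1 h2 => ?_
  simp only [mem_offDiag, mem_row] at h1 h2
  exact hB ⟨i1, i2, j1, j2, hi, h1.2.2, h1.1, h1.2.1, h2.1, h2.2.1⟩

lemma sum_card_offDiag_row_le (hB : IsRectangleFree B) :
    ∑ i, #(row B i).offDiag ≤ #(univ : Finset β).offDiag := by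
  rw [← card_biUnion hB.pairwiseDisjoint_offDiag_row]
  exact card_le_card fun p hp => by
    simp only [mem_biUnion, mem_offDiag, mem_row] at hp
    obtain ⟨_, -, -, -, hne⟩ := hp
    simpa using hne

lemma sum_sq_card_row_add_card_le (hB : IsRectangleFree B) :
    ∑ i, #(row B i) ^ 2 + Fintype.card β ≤ Fintype.card β ^ 2 + #B := by
  have hrow : ∀ i, #(row B i) ^ 2 = #(row B i).offDiag + #(row B i) := fun i => by
    rw [offDiag_card, sq, Nat.sub_add_cancel (Nat.le_mul_self _)]
  have hβ : Fintype.card β ^ 2 = #(univ : Finset β).offDiag + Fintype.card β := by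
    rw [offDiag_card, card_univ, sq, Nat.sub_add_cancel (Nat.le_mul_self _)]
  simp only [hrow, sum_add_distrib, sum_card_row, hβ]
  have := hB.sum_card_offDiag_row_le
  omega

lemma card_sq_add_le (hB : IsRectangleFree B) :
    #B ^ 2 + Fintype.card α * Fintype.card β ≤
      Fintype.card α * (Fintype.card β ^ 2 + #B) := by
  have hCS : #B ^ 2 ≤ Fintype.card α * ∑ i, #(row B i) ^ 2 := by
    simpa [sum_card_row] using sq_sum_le_card_mul_sum_sq (s := univ) (f := fun i => #(row B i))
  calc #B ^ 2 + Fintype.card α * Fintype.card β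
      ≤ Fintype.card α * (∑ i, #(row B i) ^ 2 + Fintype.card β) := by rw [mul_add]; omega
    _ ≤ Fintype.card α * (Fintype.card β ^ 2 + #B) :=
      Nat.mul_le_mul_left _ hB.sum_sq_card_row_add_card_le

lemma card_sq_lt_two_mul_cube {N : ℕ} (hN : 0 < N) {B : Finset (Fin N × Fin N)}
    (hB : IsRectangleFree B) : #B ^ 2 < 2 * N ^ 3 := by
  have hcard : #B ≤ N * N := by simpa using card_le_univ B
  have := hB.card_sq_add_le
  simp only [Fintype.card_fin] at this
  nlinarith [Nat.mul_le_mul_left N hcard, Nat.mul_pos hN hN]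

end IsRectangleFree

end RectangleFree

lemma Real.lt_sqrt_mul_rpow_three_halves_of_sq_lt {x c y : ℝ} (hy : 0 ≤ y)
    (h : x ^ 2 < c * y ^ 3) : x < √c * y ^ ((3 : ℝ) / 2) := by
  have hsqrt : √(c * y ^ 3) = √c * y ^ ((3 : ℝ) / 2) := by
    rw [Real.sqrt_mul' c (by positivity), Real.sqrt_eq_rpow (y ^ 3), ← Real.rpow_natCast,
      ← Real.rpow_mul hy]
    norm_num
  exact hsqrt ▸ Real.lt_sqrt_of_sq_lt h

theorem rectangle_free_bound (N : ℕ) (hN : 0 < N) (B : Finset (Fin N × Fin N))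
    (hB : ¬ ∃ i1 i2 j1 j2 : Fin N, i1 ≠ i2 ∧ j1 ≠ j2 ∧
      (i1, j1) ∈ B ∧ (i1, j2) ∈ B ∧ (i2, j1) ∈ B ∧ (i2, j2) ∈ B) :
    (B.card : ℝ) < Real.sqrt 2 * (N : ℝ) ^ ((3 : ℝ) / 2) := by
  have hsq : (#B : ℝ) ^ 2 < 2 * (N : ℝ) ^ 3 := by
    exact_mod_cast IsRectangleFree.card_sq_lt_two_mul_cube hN hB
  exact Real.lt_sqrt_mul_rpow_three_halves_of_sq_lt (Nat.cast_nonneg N) hsq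
end

section
/- Let A be a subset of the grid {1,...,N}³ such that no eight points of A form the corners of an axis-parallel rectangular box (i.e., there do not exist i1≠i2, j1≠j2, k1≠k2 with all eight points (i_a, j_b, k_c) in A). Then |A| < 2 · N^(11/4). -/
/-!
Let `c(i₁, i₂, k)` be the number of `j` with `(i₁, j, k), (i₂, j, k) ∈ A`, and `S = ∑ c`, the
number of ordered pairs of points of `A` on a common line parallel to the first axis. Cauchy–Schwarz
over these lines gives `|A|² ≤ N² S`. For `i₁ ≠ i₂` the relation "`(i₁, j, k), (i₂, j, k) ∈ A`"
between `k` and `j` contains no `2 × 2` rectangle, as that would be a box, so double counting gives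
`∑ₖ c(i₁, i₂, k)² ≤ ∑ₖ c(i₁, i₂, k) + N²`; the diagonal `i₁ = i₂` contributes at most `N |A|`.
A second Cauchy–Schwarz gives `S² ≤ N³ (N⁴ + S + N |A|)`, and eliminating `S` between the two
inequalities leaves `|A| < 2 N^{11/4}`.
-/

open Finset

variable {α β γ : Type*}

theorem Fintype.sum_sum_eq_sum_add_sum_offDiag [Fintype α] [DecidableEq α] {M : Type*}
    [AddCommMonoid M] (f : α → α → M) :
    ∑ a₁, ∑ a₂, f a₁ a₂ = ∑ a, f a a + ∑ p ∈ univ.offDiag, f p.1 p.2 := by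
  rw [← sum_product' univ univ f, ← diag_union_offDiag, sum_union (disjoint_diag_offDiag _),
    sum_diag]

section Relation
variable [Fintype α] [Fintype β] (r : α → β → Prop) [∀ a b, Decidable (r a b)]

theorem sum_card_filter_comm : ∑ b, #{a | r a b} = ∑ a, #{b | r a b} := by
  simp only [card_filter]
  exact sum_comm

theorem sum_card_filter_sq :
    ∑ b, #{a | r a b} ^ 2 = ∑ a₁, ∑ a₂, #{b | r a₁ b ∧ r a₂ b} := by
  simp only [card_filter, sq, sum_mul_sum, ite_zero_mul_ite_zero, mul_one]
  rw [sum_comm]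
  exact sum_congr rfl fun _ _ => sum_comm

theorem sum_card_filter_sq_le [DecidableEq β]
    (h : ∀ b₁ b₂, b₁ ≠ b₂ → #{a | r a b₁ ∧ r a b₂} ≤ 1) :
    ∑ a, #{b | r a b} ^ 2 ≤ ∑ a, #{b | r a b} + Fintype.card β ^ 2 := by
  rw [sum_card_filter_sq (fun b a => r a b), Fintype.sum_sum_eq_sum_add_sum_offDiag]
  simp only [and_self]
  rw [sum_card_filter_comm]
  gcongr
  calc ∑ p ∈ univ.offDiag, #{a | r a p.1 ∧ r a p.2} ≤ ∑ p ∈ (univ : Finset β).offDiag, 1 :=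
        sum_le_sum fun p hp => h _ _ (mem_offDiag.1 hp).2.2
    _ ≤ Fintype.card β ^ 2 := by
        simp only [sum_const, smul_eq_mul, mul_one, offDiag_card, card_univ]
        rw [sq]
        exact Nat.sub_le _ _

end Relation

def IsBoxFree (A : Finset (α × β × γ)) : Prop :=
  ¬ ∃ (i₁ i₂ : α) (j₁ j₂ : β) (k₁ k₂ : γ), i₁ ≠ i₂ ∧ j₁ ≠ j₂ ∧ k₁ ≠ k₂ ∧
    (i₁, j₁, k₁) ∈ A ∧ (i₁, j₁, k₂) ∈ A ∧ (i₁, j₂, k₁) ∈ A ∧ (i₁, j₂, k₂) ∈ A ∧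
    (i₂, j₁, k₁) ∈ A ∧ (i₂, j₁, k₂) ∈ A ∧ (i₂, j₂, k₁) ∈ A ∧ (i₂, j₂, k₂) ∈ A

section Codegree
variable [DecidableEq α] [DecidableEq β] [DecidableEq γ]

variable [Fintype β] (A : Finset (α × β × γ))

def codegree (i₁ i₂ : α) (k : γ) : ℕ := #{j | (i₁, j, k) ∈ A ∧ (i₂, j, k) ∈ A}

variable [Fintype γ]

variable {A} in
theorem IsBoxFree.sum_codegree_sq_le_of_ne (hA : IsBoxFree A) {i₁ i₂ : α} (hi : i₁ ≠ i₂) :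
    ∑ k, codegree A i₁ i₂ k ^ 2 ≤ ∑ k, codegree A i₁ i₂ k + Fintype.card β ^ 2 := by
  refine sum_card_filter_sq_le (fun k j => (i₁, j, k) ∈ A ∧ (i₂, j, k) ∈ A) fun j₁ j₂ hj => ?_
  refine card_le_one.2 fun k₁ hk₁ k₂ hk₂ => by_contra fun hk => hA ?_
  simp only [mem_filter, mem_univ, true_and] at hk₁ hk₂
  exact ⟨i₁, i₂, j₁, j₂, k₁, k₂, hi, hj, hk, hk₁.1.1, hk₂.1.1, hk₁.2.1, hk₂.2.1,
    hk₁.1.2, hk₂.1.2, hk₁.2.2, hk₂.2.2⟩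

variable [Fintype α]

theorem card_eq_sum_sum_card_filter : #A = ∑ i, ∑ j, #{k | (i, j, k) ∈ A} := by
  conv_lhs => rw [← filter_univ_mem A]
  simp only [card_filter, Fintype.sum_prod_type]

theorem sum_sum_codegree_self : ∑ i, ∑ k, codegree A i i k = #A := by
  simp only [codegree, and_self, card_eq_sum_sum_card_filter A, card_filter]
  exact sum_congr rfl fun _ _ => sum_comm

theorem card_sq_le_mul_sum_codegree :
    #A ^ 2 ≤ Fintype.card β * Fintype.card γ * ∑ i₁, ∑ i₂, ∑ k, codegree A i₁ i₂ k := by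
  have hcard : #A = ∑ p : β × γ, #{i | (i, p) ∈ A} := by
    conv_lhs => rw [← filter_univ_mem A]
    simp only [card_filter, Fintype.sum_prod_type]
    rw [sum_comm]
    exact sum_congr rfl fun _ _ => sum_comm
  calc #A ^ 2 ≤ #(univ : Finset (β × γ)) * ∑ p : β × γ, #{i | (i, p) ∈ A} ^ 2 :=
        hcard ▸ sq_sum_le_card_mul_sum_sq
    _ = Fintype.card β * Fintype.card γ * ∑ k, ∑ j, #{i | (i, j, k) ∈ A} ^ 2 := by
        rw [card_univ, Fintype.card_prod, Fintype.sum_prod_type, sum_comm]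
    _ = Fintype.card β * Fintype.card γ * ∑ i₁, ∑ i₂, ∑ k, codegree A i₁ i₂ k := by
        simp only [codegree, sum_card_filter_sq fun i j => (i, j, _) ∈ A]
        rw [sum_comm]
        exact congrArg _ (sum_congr rfl fun _ _ => sum_comm)

theorem sq_sum_codegree_le :
    (∑ i₁, ∑ i₂, ∑ k, codegree A i₁ i₂ k) ^ 2 ≤
      Fintype.card α ^ 2 * Fintype.card γ * ∑ i₁, ∑ i₂, ∑ k, codegree A i₁ i₂ k ^ 2 := by
  have h := sq_sum_le_card_mul_sum_sq (s := univ)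
    (f := fun p : α × α × γ => codegree A p.1 p.2.1 p.2.2)
  simpa only [Fintype.sum_prod_type, card_univ, Fintype.card_prod, Nat.cast_id, sq, mul_assoc]
    using h

variable {A}

theorem IsBoxFree.sum_codegree_sq_le (hA : IsBoxFree A) :
    ∑ i₁, ∑ i₂, ∑ k, codegree A i₁ i₂ k ^ 2 ≤
      Fintype.card α ^ 2 * Fintype.card β ^ 2 + ∑ i₁, ∑ i₂, ∑ k, codegree A i₁ i₂ k +
        Fintype.card β * #A := by
  have hdiag : ∑ i, ∑ k, codegree A i i k ^ 2 ≤ Fintype.card β * #A := by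
    calc ∑ i, ∑ k, codegree A i i k ^ 2 ≤ ∑ i, ∑ k, Fintype.card β * codegree A i i k := by
          gcongr with i _ k _
          rw [sq]
          exact Nat.mul_le_mul_right _ (card_filter_le _ _)
      _ = Fintype.card β * #A := by simp only [← mul_sum, sum_sum_codegree_self]
  have hoff : ∑ p ∈ univ.offDiag, ∑ k, codegree A p.1 p.2 k ^ 2 ≤
      ∑ p ∈ univ.offDiag, ∑ k, codegree A p.1 p.2 k + Fintype.card α ^ 2 * Fintype.card β ^ 2 := by
    calc ∑ p ∈ univ.offDiag, ∑ k, codegree A p.1 p.2 k ^ 2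
        ≤ ∑ p ∈ univ.offDiag, (∑ k, codegree A p.1 p.2 k + Fintype.card β ^ 2) :=
          sum_le_sum fun p hp => hA.sum_codegree_sq_le_of_ne (mem_offDiag.1 hp).2.2
      _ ≤ _ := by
          rw [sum_add_distrib, sum_const, offDiag_card, card_univ, smul_eq_mul]
          gcongr
          exact (Nat.sub_le _ _).trans_eq (sq _).symm
  rw [Fintype.sum_sum_eq_sum_add_sum_offDiag (fun i₁ i₂ => ∑ k, codegree A i₁ i₂ k ^ 2),
    Fintype.sum_sum_eq_sum_add_sum_offDiag (fun i₁ i₂ => ∑ k, codegree A i₁ i₂ k)]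
  omega

end Codegree

theorem lt_two_mul_pow_eleven {q a s : ℝ} (hq : 1 ≤ q) (ha : a ≤ q ^ 12)
    (h₁ : a ^ 2 ≤ q ^ 8 * s) (h₂ : s ^ 2 ≤ q ^ 28 + q ^ 12 * s + q ^ 16 * a) :
    a < 2 * q ^ 11 := by
  by_contra! h
  have hq11 : 0 < q ^ 11 := by positivity
  rcases lt_or_ge q 2 with hq2 | hq2
  · have : q ^ 12 < 2 * q ^ 11 := by rw [pow_succ']; gcongr
    linarith
  have hs : 4 * q ^ 14 ≤ s := by
    refine le_of_mul_le_mul_left ?_ (by positivity : (0 : ℝ) < q ^ 8)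
    nlinarith
  have hs0 : 0 < s := lt_of_lt_of_le (by positivity) hs
  have hq12 : 16 * q ^ 12 ≤ 4 * q ^ 14 := by
    calc 16 * q ^ 12 = 4 * q ^ 12 * 2 ^ 2 := by ring
      _ ≤ 4 * q ^ 12 * q ^ 2 := by gcongr
      _ = 4 * q ^ 14 := by ring
  have hq16 : q ^ 16 * a ≤ q ^ 28 := by
    calc q ^ 16 * a ≤ q ^ 16 * q ^ 12 := by gcongr
      _ = q ^ 28 := by ring
  -- each of the three terms bounding `s ^ 2` in `h₂` is at most `s ^ 2 / 16`
  nlinarith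

theorem box_free_bound (N : ℕ) (hN : 0 < N) (A : Finset (Fin N × Fin N × Fin N))
    (hA : ¬ ∃ i1 i2 j1 j2 k1 k2 : Fin N, i1 ≠ i2 ∧ j1 ≠ j2 ∧ k1 ≠ k2 ∧
      (i1, j1, k1) ∈ A ∧ (i1, j1, k2) ∈ A ∧ (i1, j2, k1) ∈ A ∧ (i1, j2, k2) ∈ A ∧
      (i2, j1, k1) ∈ A ∧ (i2, j1, k2) ∈ A ∧ (i2, j2, k1) ∈ A ∧ (i2, j2, k2) ∈ A) :
    (A.card : ℝ) < 2 * (N : ℝ) ^ ((11 : ℝ) / 4) := by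
  set q : ℝ := (N : ℝ) ^ ((1 : ℝ) / 4)
  have hq_pow : ∀ n : ℕ, q ^ n = (N : ℝ) ^ ((n : ℝ) / 4) := fun n => by
    rw [← Real.rpow_natCast, ← Real.rpow_mul (Nat.cast_nonneg N)]
    ring_nf
  have hN4 : (N : ℝ) = q ^ 4 := by rw [hq_pow]; norm_num
  have hq : 1 ≤ q := Real.one_le_rpow (by exact_mod_cast hN) (by norm_num)
  set S := ∑ i₁, ∑ i₂, ∑ k, codegree A i₁ i₂ k
  have hA_le : #A ≤ N ^ 3 := (card_le_univ A).trans_eq (by simp [pow_succ, mul_assoc])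
  have h₁ : #A ^ 2 ≤ N ^ 2 * S := by
    simpa only [Fintype.card_fin, sq] using card_sq_le_mul_sum_codegree A
  have h₂ : S ^ 2 ≤ N ^ 3 * (N ^ 4 + S + N * #A) := by
    have := (sq_sum_codegree_le A).trans (Nat.mul_le_mul_left _ (IsBoxFree.sum_codegree_sq_le hA))
    simpa only [Fintype.card_fin, pow_succ, pow_zero, one_mul, mul_assoc] using this
  rw [show (11 : ℝ) / 4 = ((11 : ℕ) : ℝ) / 4 by norm_num, ← hq_pow]
  refine lt_two_mul_pow_eleven (s := S) hq ?_ ?_ ?_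
  · calc (#A : ℝ) ≤ (N : ℝ) ^ 3 := by exact_mod_cast hA_le
      _ = q ^ 12 := by rw [hN4]; ring
  · calc (#A : ℝ) ^ 2 ≤ (N : ℝ) ^ 2 * S := by exact_mod_cast h₁
      _ = q ^ 8 * S := by rw [hN4]; ring
  · calc (S : ℝ) ^ 2 ≤ (N : ℝ) ^ 3 * (N ^ 4 + S + N * #A) := by exact_mod_cast h₂
      _ = _ := by rw [hN4]; ring
end

section
/- The minimum number of marked points in the 4×4 grid {1,...,4}² such that every axis-parallel rectangle has at least one marked corner is 7. -/
/-!
Two rows `i < i'` can share at most one unmarked column, since two shared unmarked columns would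
be the corners of an unhit rectangle. So in the 4×4 grid the numbers of unmarked cells of any two
rows add up to at most 5. Four naturals with all pairwise sums at most 5 add up to at most 9, so at
most 9 cells are unmarked and at least 7 are marked. Seven marks suffice, as an explicit
configuration shows.
-/

def HitsAllRectangles (N : ℕ) (R : Finset (Fin N × Fin N)) : Prop :=
  ∀ i1 i2 j1 j2 : Fin N, i1 < i2 → j1 < j2 →
    ((i1, j1) ∈ R ∨ (i1, j2) ∈ R ∨ (i2, j1) ∈ R ∨ (i2, j2) ∈ R)

open Finset

section

variable {N : ℕ}

def unmarkedRow (R : Finset (Fin N × Fin N)) (i : Fin N) : Finset (Fin N) :=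
  univ.filter fun j => (i, j) ∉ R

theorem card_compl_eq_sum_card_unmarkedRow (R : Finset (Fin N × Fin N)) :
    #Rᶜ = ∑ i, #(unmarkedRow R i) := by
  have hcompl : Rᶜ = univ.filter fun p => p ∉ R := by ext; simp
  rw [hcompl, card_filter, Fintype.sum_prod_type]
  simp only [unmarkedRow, card_filter]

namespace HitsAllRectangles

variable {R : Finset (Fin N × Fin N)} {i i' : Fin N}

theorem card_inter_unmarkedRow_le_one (hR : HitsAllRectangles N R) (hi : i < i') :
    #(unmarkedRow R i ∩ unmarkedRow R i') ≤ 1 := by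
  refine card_le_one.mpr fun j hj j' hj' => ?_
  simp only [unmarkedRow, mem_inter, mem_filter, mem_univ, true_and] at hj hj'
  by_contra hne
  rcases lt_or_gt_of_ne hne with h | h
  · rcases hR i i' j j' hi h with h | h | h | h <;> tauto
  · rcases hR i i' j' j hi h with h | h | h | h <;> tauto

theorem card_unmarkedRow_add_card_unmarkedRow_le (hR : HitsAllRectangles N R) (hi : i < i') :
    #(unmarkedRow R i) + #(unmarkedRow R i') ≤ N + 1 := by
  have hunion : #(unmarkedRow R i ∪ unmarkedRow R i') ≤ N := by
    simpa using card_le_univ (unmarkedRow R i ∪ unmarkedRow R i')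
  have hinter := hR.card_inter_unmarkedRow_le_one hi
  rw [← card_union_add_card_inter]
  omega

end HitsAllRectangles

end

theorem min_marks_four_grid :
    IsLeast {m : ℕ | ∃ R : Finset (Fin 4 × Fin 4), HitsAllRectangles 4 R ∧ R.card = m} 7 := by
  constructor
  · exact ⟨{(0, 3), (1, 1), (1, 2), (2, 0), (2, 2), (3, 0), (3, 1)},
      by unfold HitsAllRectangles; decide, rfl⟩
  · rintro m ⟨R, hR, rfl⟩
    have hpair := fun i i' (hi : i < i') => hR.card_unmarkedRow_add_card_unmarkedRow_le hi
    have hunmarked := card_compl_eq_sum_card_unmarkedRow R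
    rw [Fin.sum_univ_four] at hunmarked
    have htotal : #R + #Rᶜ = 16 := (card_add_card_compl R).trans (by simp)
    have := hpair 0 1 (by decide)
    have := hpair 0 2 (by decide)
    have := hpair 0 3 (by decide)
    have := hpair 1 2 (by decide)
    have := hpair 1 3 (by decide)
    have := hpair 2 3 (by decide)
    omega
end

section
/- Let n ≥ 1 and let k satisfy n/2 < k ≤ n. If A is an n×n matrix with entries in {0,1} such that every k×k minor (submatrix given by k rows and k columns) contains at least one entry equal to 1, then the number of 1-entries of A is at least 2(n-k)+1. -/
/-
If `A` had at most `2(n - k)` ones, split them into two groups of at most `n - k` each. The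
rows of the first group and the columns of the second can be covered by `n - k` rows and
`n - k` columns, and the remaining `k` rows and `k` columns span a minor without a 1.
-/

/-- Every k×k minor (choice of k rows and k columns) of `A` contains a 1. -/
def MinorHit (n k : ℕ) (A : Fin n → Fin n → Bool) : Prop :=
  ∀ S T : Finset (Fin n), S.card = k → T.card = k → ∃ i ∈ S, ∃ j ∈ T, A i j = true

/-- The number of entries of `A` equal to 1. -/
def onesCount {n : ℕ} (A : Fin n → Fin n → Bool) : ℕ :=
  (Finset.univ.filter fun p : Fin n × Fin n => A p.1 p.2 = true).card

open Finset

theorem Finset.exists_rows_cols_cover {α β : Type*} [Fintype α] [Fintype β] [DecidableEq α]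
    [DecidableEq β] (E : Finset (α × β)) {r c : ℕ} (hE : #E ≤ r + c)
    (hr : r ≤ Fintype.card α) (hc : c ≤ Fintype.card β) :
    ∃ R : Finset α, ∃ C : Finset β, #R = r ∧ #C = c ∧ ∀ p ∈ E, p.1 ∈ R ∨ p.2 ∈ C := by
  obtain ⟨E₁, hE₁E, hE₁⟩ := exists_subset_card_eq (min_le_left #E r)
  have hE₂ : #(E \ E₁) ≤ c := by rw [card_sdiff_of_subset hE₁E, hE₁]; omega
  obtain ⟨R, hE₁R, hR⟩ :=
    exists_superset_card_eq (card_image_le.trans (hE₁.trans_le (min_le_right _ _))) hr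
  obtain ⟨C, hE₂C, hC⟩ := exists_superset_card_eq (card_image_le.trans hE₂) hc
  refine ⟨R, C, hR, hC, fun p hp => ?_⟩
  by_cases hp₁ : p ∈ E₁
  · exact .inl (hE₁R (mem_image_of_mem _ hp₁))
  · exact .inr (hE₂C (mem_image_of_mem _ (mem_sdiff.2 ⟨hp, hp₁⟩)))

theorem minor_lower_bound_general (n k : ℕ) (hk2 : k ≤ n)
    (A : Fin n → Fin n → Bool) (hA : MinorHit n k A) :
    2 * (n - k) + 1 ≤ onesCount A := by
  by_contra! hfew
  obtain ⟨R, C, hR, hC, hcover⟩ :=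
    exists_rows_cols_cover (univ.filter fun p : Fin n × Fin n => A p.1 p.2 = true)
      (r := n - k) (c := n - k) (by rw [onesCount] at hfew; omega) (by simp) (by simp)
  obtain ⟨i, hi, j, hj, hij⟩ :=
    hA Rᶜ Cᶜ (by rw [card_compl, hR, Fintype.card_fin]; omega)
      (by rw [card_compl, hC, Fintype.card_fin]; omega)
  rcases hcover (i, j) (by simp [hij]) with hiR | hjC
  · exact mem_compl.1 hi hiR
  · exact mem_compl.1 hj hjC

theorem minor_lower_bound (n k : ℕ) (hn : 1 ≤ n) (hk1 : n < 2 * k) (hk2 : k ≤ n)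
    (A : Fin n → Fin n → Bool) (hA : MinorHit n k A) :
    2 * (n - k) + 1 ≤ onesCount A :=
  minor_lower_bound_general n k hk2 A hA
end

section
/- Let n ≥ 1 and n/2 < k ≤ n. There exists an n×n matrix with entries in {0,1} having exactly 2(n-k)+1 entries equal to 1 such that every k×k minor contains at least one entry equal to 1; namely, the matrix with 1's in the first 2(n-k)+1 diagonal positions and 0 elsewhere. -/
/-- The matrix with 1's in the first `2*(n-k)+1` diagonal positions and 0 elsewhere. -/
def diagMatrix (n k : ℕ) : Fin n → Fin n → Bool :=
  fun i j => decide (i = j ∧ i.val < 2 * (n - k) + 1)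

/-
Any `k` rows and `k` columns share at least `2k - n` indices, so they meet the diagonal in at least
`2k - n` positions; since `2k - n + (2(n-k)+1) > n`, one of these lies among the first
`2(n-k)+1` diagonal positions.
-/

open Finset

theorem Finset.card_add_card_le_card_inter_add_card_univ {α : Type*} [Fintype α] [DecidableEq α]
    (s t : Finset α) : #s + #t ≤ #(s ∩ t) + Fintype.card α := by
  rw [← card_union_add_card_inter, add_comm]
  exact Nat.add_le_add_left (card_le_univ _) _

theorem onesCount_diagonal {n : ℕ} (p : Fin n → Prop) [DecidablePred p] :
    onesCount (fun i j => decide (i = j ∧ p i)) = #{i | p i} := by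
  rw [onesCount, ← diag_card {i | p i}]
  congr 1
  ext ⟨i, j⟩
  simp only [mem_filter, mem_univ, true_and, decide_eq_true_eq, mem_diag]
  grind

theorem minorHit_of_diagonal {n k : ℕ} {A : Fin n → Fin n → Bool} (D : Finset (Fin n))
    (hD : ∀ i ∈ D, A i i = true) (hcard : 2 * n < 2 * k + #D) : MinorHit n k A := by
  intro S T hS hT
  have hST := card_add_card_le_card_inter_add_card_univ S T
  rw [hS, hT, Fintype.card_fin] at hST
  obtain ⟨i, hi⟩ : (S ∩ T ∩ D).Nonempty :=
    inter_nonempty_of_card_lt_card_add_card (subset_univ _) (subset_univ _)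
      (by rw [card_univ, Fintype.card_fin]; omega)
  simp only [mem_inter] at hi
  exact ⟨i, hi.1.1, i, hi.1.2, hD i hi.2⟩

theorem diag_matrix_realizes_minimum_general (n k : ℕ) (hk1 : n < 2 * k) (hk2 : k ≤ n) :
    onesCount (diagMatrix n k) = 2 * (n - k) + 1 ∧ MinorHit n k (diagMatrix n k) := by
  set D : Finset (Fin n) := {i | i < 2 * (n - k) + 1}
  have hD : #D = 2 * (n - k) + 1 := by
    rw [Fin.card_filter_val_lt]
    omega
  refine ⟨(onesCount_diagonal _).trans hD, minorHit_of_diagonal D ?_ (by omega)⟩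
  intro i hi
  simpa [diagMatrix, D] using hi

theorem diag_matrix_realizes_minimum (n k : ℕ) (hn : 1 ≤ n) (hk1 : n < 2 * k) (hk2 : k ≤ n) :
    onesCount (diagMatrix n k) = 2 * (n - k) + 1 ∧ MinorHit n k (diagMatrix n k) :=
  diag_matrix_realizes_minimum_general n k hk1 hk2
end

section
/- Let n ≥ 1 and n/2 < k ≤ n, and suppose A is an n×n {0,1}-matrix with exactly 2(n-k)+1 ones such that every k×k minor contains a 1. Then there are permutations of the rows and columns of A transforming it into the diagonal matrix with 1's in the first 2(n-k)+1 diagonal entries and 0 elsewhere; in particular all 1's of A lie in distinct rows and distinct columns. -/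
/-!
If two of the `2(n-k)+1` ones shared a row, that row together with the rows of `n-k-1` further
ones and the columns of the remaining `n-k` ones would cover every one with `n-k` rows and
`n-k` columns; the complementary `k×k` minor would then contain no one. By symmetry the ones
also lie in distinct columns, so they form a partial permutation matrix, and permuting rows and
columns moves it onto the diagonal.
-/

open Finset

section Cover

variable {α β : Type*} [DecidableEq α] [DecidableEq β]

lemma exists_rows_cols_cover (O : Finset (α × β)) {a b : ℕ} (h : #O ≤ a + b) :
    ∃ (R : Finset α) (C : Finset β), #R ≤ a ∧ #C ≤ b ∧ ∀ p ∈ O, p.1 ∈ R ∨ p.2 ∈ C := by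
  obtain ⟨B, hBO, hB⟩ := exists_subset_card_eq (min_le_right a #O)
  refine ⟨B.image Prod.fst, (O \ B).image Prod.snd, ?_, ?_, fun p hp => ?_⟩
  · exact card_image_le.trans (hB ▸ min_le_left _ _)
  · refine card_image_le.trans ?_
    rw [card_sdiff_of_subset hBO]
    omega
  · by_cases hpB : p ∈ B
    · exact Or.inl (mem_image_of_mem _ hpB)
    · exact Or.inr (mem_image_of_mem _ (mem_sdiff.2 ⟨hp, hpB⟩))

lemma exists_rows_cols_cover_of_fst_eq {O : Finset (α × β)} {t : ℕ} (h : #O ≤ 2 * t + 1)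
    {p q : α × β} (hp : p ∈ O) (hq : q ∈ O) (hpq : p ≠ q) (hfst : p.1 = q.1) :
    ∃ (R : Finset α) (C : Finset β), #R ≤ t ∧ #C ≤ t ∧ ∀ r ∈ O, r.1 ∈ R ∨ r.2 ∈ C := by
  have hqO : q ∈ O.erase p := mem_erase.2 ⟨hpq.symm, hq⟩
  have htwo : 2 ≤ #O := one_lt_card.2 ⟨p, hp, q, hq, hpq⟩
  have hrest : #((O.erase p).erase q) ≤ (t - 1) + t := by
    rw [card_erase_of_mem hqO, card_erase_of_mem hp]
    omega
  obtain ⟨R, C, hR, hC, hcover⟩ := exists_rows_cols_cover _ hrest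
  refine ⟨insert p.1 R, C, (card_insert_le _ _).trans (by omega), hC, fun r hr => ?_⟩
  by_cases hrp : r = p
  · exact Or.inl (hrp ▸ mem_insert_self _ _)
  by_cases hrq : r = q
  · exact Or.inl (hrq ▸ hfst ▸ mem_insert_self _ _)
  exact (hcover r (mem_erase.2 ⟨hrq, mem_erase.2 ⟨hrp, hr⟩⟩)).imp_left (mem_insert_of_mem ·)

end Cover

section Matching

lemma exists_perms_mem_iff_diag {n : ℕ} (O : Finset (Fin n × Fin n))
    (hfst : Set.InjOn Prod.fst (O : Set (Fin n × Fin n))) (hsnd : Set.InjOn Prod.snd (O : Set (Fin n × Fin n))) :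
    ∃ σ τ : Equiv.Perm (Fin n), ∀ i j, (σ i, τ j) ∈ O ↔ i = j ∧ (i : ℕ) < #O := by
  have hcard : #O ≤ n := by
    simpa using card_le_card_of_injOn Prod.fst (fun _ _ => mem_univ _) hfst
  let e : Fin #O ≃ O := O.equivFin.symm
  have hrow : Function.Injective fun t => (e t).1.1 := fun a b h =>
    e.injective (Subtype.ext (hfst (e a).2 (e b).2 h))
  have hcol : Function.Injective fun t => (e t).1.2 := fun a b h =>
    e.injective (Subtype.ext (hsnd (e a).2 (e b).2 h))
  obtain ⟨σ, hσ⟩ := Equiv.Perm.exists_extending_pair _ _ (Fin.castLE_injective hcard) hrow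
  obtain ⟨τ, hτ⟩ := Equiv.Perm.exists_extending_pair _ _ (Fin.castLE_injective hcard) hcol
  refine ⟨σ, τ, fun i j => ⟨fun hij => ?_, ?_⟩⟩
  · set t := e.symm ⟨_, hij⟩
    have het : (e t : Fin n × Fin n) = (σ i, τ j) := by simp [t]
    have hi : i = Fin.castLE hcard t := σ.injective (by rw [hσ, het])
    have hj : j = Fin.castLE hcard t := τ.injective (by rw [hτ, het])
    exact ⟨hi.trans hj.symm, hi ▸ t.2⟩
  · rintro ⟨rfl, hi⟩
    have hσi := hσ ⟨i, hi⟩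
    have hτi := hτ ⟨i, hi⟩
    simp only [Fin.castLE_mk, Fin.eta] at hσi hτi
    rw [hσi, hτi]
    exact (e ⟨i, hi⟩).2

end Matching

section Minors

variable {n k : ℕ} {A : Fin n → Fin n → Bool}

def ones (A : Fin n → Fin n → Bool) : Finset (Fin n × Fin n) :=
  univ.filter fun p => A p.1 p.2 = true

@[simp]
lemma mem_ones {p : Fin n × Fin n} : p ∈ ones A ↔ A p.1 p.2 = true := by
  simp [ones]

lemma onesCount_eq_card_ones : onesCount A = #(ones A) := rfl

lemma onesCount_swap : onesCount (fun i j => A j i) = onesCount A :=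
  card_equiv (Equiv.prodComm _ _) (by simp)

lemma MinorHit.swap (hA : MinorHit n k A) : MinorHit n k fun i j => A j i := by
  intro S T hS hT
  obtain ⟨i, hi, j, hj, h⟩ := hA T S hT hS
  exact ⟨j, hj, i, hi, h⟩

lemma MinorHit.exists_one_not_mem (hA : MinorHit n k A) (hk : k ≤ n) {R C : Finset (Fin n)}
    (hR : #R ≤ n - k) (hC : #C ≤ n - k) : ∃ i ∉ R, ∃ j ∉ C, A i j = true := by
  obtain ⟨R', hRR', -, hR'⟩ := exists_subsuperset_card_eq R.subset_univ hR (by simp)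
  obtain ⟨C', hCC', -, hC'⟩ := exists_subsuperset_card_eq C.subset_univ hC (by simp)
  obtain ⟨i, hi, j, hj, hij⟩ := hA R'ᶜ C'ᶜ (by simp [card_compl, hR']; omega)
    (by simp [card_compl, hC']; omega)
  exact ⟨i, fun h => mem_compl.1 hi (hRR' h), j, fun h => mem_compl.1 hj (hCC' h), hij⟩

lemma MinorHit.injOn_fst_ones (hA : MinorHit n k A) (hcard : onesCount A ≤ 2 * (n - k) + 1) :
    Set.InjOn Prod.fst (ones A : Set (Fin n × Fin n)) := by
  intro p hp q hq hfst
  by_contra hpq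
  have htwo : 2 ≤ onesCount A := one_lt_card.2 ⟨p, hp, q, hq, hpq⟩
  obtain ⟨R, C, hR, hC, hcover⟩ := exists_rows_cols_cover_of_fst_eq hcard hp hq hpq hfst
  obtain ⟨i, hi, j, hj, hij⟩ := hA.exists_one_not_mem (by omega) hR hC
  exact (hcover (i, j) (mem_ones.2 hij)).elim hi hj

lemma MinorHit.injOn_snd_ones (hA : MinorHit n k A) (hcard : onesCount A ≤ 2 * (n - k) + 1) :
    Set.InjOn Prod.snd (ones A : Set (Fin n × Fin n)) := fun _ hp _ hq h =>
  Prod.swap_injective <| hA.swap.injOn_fst_ones (onesCount_swap.trans_le hcard)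
    (mem_ones.2 (mem_ones.1 hp)) (mem_ones.2 (mem_ones.1 hq)) h

end Minors

theorem minimum_configuration_unique_general (n k : ℕ)
    (A : Fin n → Fin n → Bool) (hA : MinorHit n k A)
    (hcard : onesCount A = 2 * (n - k) + 1) :
    (∃ σ τ : Equiv.Perm (Fin n), ∀ i j, A (σ i) (τ j) = diagMatrix n k i j) ∧
    (∀ p q : Fin n × Fin n, A p.1 p.2 = true → A q.1 q.2 = true → p ≠ q →
      p.1 ≠ q.1 ∧ p.2 ≠ q.2) := by
  have hfst := hA.injOn_fst_ones hcard.le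
  have hsnd := hA.injOn_snd_ones hcard.le
  refine ⟨?_, fun p q hp hq hpq =>
    ⟨fun h => hpq (hfst (mem_ones.2 hp) (mem_ones.2 hq) h),
      fun h => hpq (hsnd (mem_ones.2 hp) (mem_ones.2 hq) h)⟩⟩
  obtain ⟨σ, τ, hστ⟩ := exists_perms_mem_iff_diag (ones A) hfst hsnd
  refine ⟨σ, τ, fun i j => ?_⟩
  rw [Bool.eq_iff_iff, ← mem_ones (p := (σ i, τ j)), hστ, ← onesCount_eq_card_ones, hcard,
    diagMatrix, decide_eq_true_iff]

theorem minimum_configuration_unique (n k : ℕ) (hn : 1 ≤ n) (hk1 : n < 2 * k) (hk2 : k ≤ n)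
    (A : Fin n → Fin n → Bool) (hA : MinorHit n k A)
    (hcard : onesCount A = 2 * (n - k) + 1) :
    (∃ σ τ : Equiv.Perm (Fin n), ∀ i j, A (σ i) (τ j) = diagMatrix n k i j) ∧
    (∀ p q : Fin n × Fin n, A p.1 p.2 = true → A q.1 q.2 = true → p ≠ q →
      p.1 ≠ q.1 ∧ p.2 ≠ q.2) :=
  minimum_configuration_unique_general n k A hA hcard
end

section
/- Let k ≥ 2 and n = 2k. If A is an n×n matrix with entries in {0,1} such that every k×k minor contains at least one entry equal to 1, then A has at least 3k+1 entries equal to 1. -/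
/-!
Call the number of ones in a row its degree. Any `k` rows together have more than `k` ones, since
otherwise their ones lie in at most `k` columns and the `k` remaining columns give an all-zero minor.
Take `k` rows `S` of least total degree. Its total exceeds `k`, so some row of `S` has degree at
least `2`; by minimality of `S`, swapping that row for any row outside `S` cannot lower the total,
so each of the `k` rows outside `S` has degree at least `2` as well. Hence the number of ones is at
least `(k + 1) + 2k`.
-/

open Finset

theorem Finset.apply_le_of_sum_minimal {ι M : Type*} [DecidableEq ι]
    [AddCommMonoid M] [LinearOrder M] [IsOrderedCancelAddMonoid M] {f : ι → M} {S : Finset ι}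
    (hmin : ∀ T : Finset ι, T.card = S.card → ∑ i ∈ S, f i ≤ ∑ i ∈ T, f i)
    {i j : ι} (hi : i ∈ S) (hj : j ∉ S) : f i ≤ f j := by
  have hj' : j ∉ S.erase i := fun h => hj (mem_of_mem_erase h)
  have hcard : (insert j (S.erase i)).card = S.card := by
    rw [card_insert_of_notMem hj', card_erase_add_one hi]
  have hle := hmin _ hcard
  rw [← add_sum_erase S f hi, sum_insert hj', add_comm (f i), add_comm (f j)] at hle
  exact le_of_add_le_add_left hle

theorem Finset.add_two_mul_le_sum_of_card_lt_sum {ι : Type*} [Fintype ι] [DecidableEq ι]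
    (f : ι → ℕ) {k : ℕ} (hk : k ≤ Fintype.card ι)
    (h : ∀ S : Finset ι, S.card = k → k < ∑ i ∈ S, f i) :
    k + 1 + 2 * (Fintype.card ι - k) ≤ ∑ i, f i := by
  have hne : (powersetCard k (univ : Finset ι)).Nonempty := powersetCard_nonempty.2 (by simpa)
  obtain ⟨S, hSmem, hSmin⟩ := exists_min_image _ (fun S => ∑ i ∈ S, f i) hne
  have hS : S.card = k := (mem_powersetCard.1 hSmem).2
  have hmin : ∀ T : Finset ι, T.card = S.card → ∑ i ∈ S, f i ≤ ∑ i ∈ T, f i := fun T hT =>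
    hSmin T (mem_powersetCard.2 ⟨subset_univ T, hT.trans hS⟩)
  obtain ⟨i₀, hi₀, hfi₀⟩ : ∃ i ∈ S, 1 < f i :=
    exists_lt_of_sum_lt (by simpa [hS] using h S hS)
  have houtside : ∀ j ∈ Sᶜ, 2 ≤ f j := fun j hj =>
    hfi₀.trans_le (apply_le_of_sum_minimal hmin hi₀ (mem_compl.1 hj))
  calc k + 1 + 2 * (Fintype.card ι - k)
      = k + 1 + Sᶜ.card • 2 := by rw [card_compl, hS, smul_eq_mul, mul_comm]
    _ ≤ ∑ i ∈ S, f i + ∑ i ∈ Sᶜ, f i := add_le_add (h S hS) (card_nsmul_le_sum _ _ _ houtside)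
    _ = ∑ i, f i := sum_add_sum_compl S f

def rowSupport {n : ℕ} (A : Fin n → Fin n → Bool) (i : Fin n) : Finset (Fin n) :=
  {j | A i j = true}

theorem onesCount_eq_sum_card_rowSupport {n : ℕ} (A : Fin n → Fin n → Bool) :
    onesCount A = ∑ i, (rowSupport A i).card := by
  rw [onesCount, card_filter, Fintype.sum_prod_type]
  exact sum_congr rfl fun i _ => (card_filter _ _).symm

theorem MinorHit.lt_add_sum_card_rowSupport {n k : ℕ} {A : Fin n → Fin n → Bool}
    (hA : MinorHit n k A) {S : Finset (Fin n)} (hS : S.card = k) :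
    n < k + ∑ i ∈ S, (rowSupport A i).card := by
  by_contra! hsum
  have hN : k ≤ (S.biUnion (rowSupport A))ᶜ.card := by
    have := card_biUnion_le (s := S) (t := rowSupport A)
    rw [card_compl, Fintype.card_fin]
    omega
  obtain ⟨T, hTN, hT⟩ := exists_subset_card_eq hN
  obtain ⟨i, hi, j, hj, hij⟩ := hA S T hS hT
  exact mem_compl.1 (hTN hj) (mem_biUnion.2 ⟨i, hi, by simpa [rowSupport] using hij⟩)

theorem half_case_lower_bound_general (k : ℕ)
    (A : Fin (2 * k) → Fin (2 * k) → Bool) (hA : MinorHit (2 * k) k A) :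
    3 * k + 1 ≤ onesCount A := by
  have hbound := add_two_mul_le_sum_of_card_lt_sum (fun i => (rowSupport A i).card) (k := k)
    (by rw [Fintype.card_fin]; omega) fun S hS => by
      have := hA.lt_add_sum_card_rowSupport hS
      omega
  rw [Fintype.card_fin] at hbound
  rw [onesCount_eq_sum_card_rowSupport]
  omega

theorem half_case_lower_bound (k : ℕ) (hk : 2 ≤ k)
    (A : Fin (2 * k) → Fin (2 * k) → Bool) (hA : MinorHit (2 * k) k A) :
    3 * k + 1 ≤ onesCount A :=
  half_case_lower_bound_general k A hA
end

section
/- Let k ≥ 1 and n = 2k+1, and define α(k,n) as the minimum number of 1-entries in an n×n {0,1}-matrix in which every k×k minor contains at least one 1. Then α(k, 2k+1) ≤ 4k+5. -/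
/-- `alpha k n` is the minimum number of 1-entries in an `n × n` {0,1}-matrix in which
every `k × k` minor contains at least one 1. -/
noncomputable def alpha (k n : ℕ) : ℕ :=
  sInf {m : ℕ | ∃ A : Fin n → Fin n → Bool, MinorHit n k A ∧ onesCount A = m}

/-!
The witness is the block matrix `diag(I_{k-1}, C)`, where `C` is the `(k+2) × (k+2)` circulant
with three consecutive ones per row; it has `(k - 1) + 3 (k + 2) = 4k + 5` ones. A set of `k` rows
must contain some rows of `C`, and a nonempty set `J` of at most `k` residues mod `k + 2` satisfies
`|J + {0, 1, 2}| ≥ |J| + 2`, because a nonempty proper subset of `ZMod m` grows when `{0, 1}` is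
added to it. So any `k` rows have ones in at least `k + 2` columns, which leaves fewer than `k`
columns for an all-zero `k × k` minor.
-/

open Finset
open scoped Pointwise

namespace ZMod

variable {m : ℕ} [NeZero m]

theorem eq_univ_of_add_one_mem {s : Finset (ZMod m)} (hs : s.Nonempty)
    (h : ∀ x ∈ s, x + 1 ∈ s) : s = univ := by
  obtain ⟨a, ha⟩ := hs
  have horbit : ∀ n : ℕ, a + n ∈ s := by
    intro n
    induction n with
    | zero => simpa using ha
    | succ n ih => simpa [add_assoc] using h _ ih
  refine eq_univ_of_forall fun b => ?_
  simpa using horbit (b - a).val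

theorem min_le_card_add_zero_one {s : Finset (ZMod m)} (hs : s.Nonempty) :
    min m (#s + 1) ≤ #(s + {0, 1}) := by
  by_cases huniv : s + {0, 1} = univ
  · simp [huniv]
  have hsub : s ⊆ s + {0, 1} := subset_add_left s (by simp)
  suffices #s < #(s + {0, 1}) by omega
  refine card_lt_card (hsub.ssubset_of_ne fun heq => huniv ?_)
  have hclosed : ∀ x ∈ s, x + 1 ∈ s := fun x hx => by
    rw [heq]
    exact add_mem_add hx (by simp)
  rw [← heq]
  exact eq_univ_of_add_one_mem hs hclosed

theorem min_le_card_add_zero_one_two {s : Finset (ZMod m)} (hs : s.Nonempty) :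
    min m (#s + 2) ≤ #(s + {0, 1, 2}) := by
  have hpair : ({0, 1, 2} : Finset (ZMod m)) = {0, 1} + {0, 1} := by
    ext x
    simp only [mem_insert, mem_singleton, mem_add, exists_eq_or_imp, add_zero, existsAndEq,
      true_and, zero_add]
    grind
  have h₁ := min_le_card_add_zero_one hs
  have h₂ := min_le_card_add_zero_one (hs.add (t := {0, 1}) (by simp))
  rw [hpair, ← add_assoc]
  omega

end ZMod

theorem alpha_le_onesCount {n k : ℕ} {A : Fin n → Fin n → Bool} (hA : MinorHit n k A) :
    alpha k n ≤ onesCount A :=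
  Nat.sInf_le ⟨A, hA, rfl⟩

section MatrixOfRows

variable {ι : Type*} [Fintype ι] [DecidableEq ι] {n : ℕ}

def matrixOfRows (e : ι ≃ Fin n) (row : ι → Finset ι) : Fin n → Fin n → Bool :=
  fun i j => decide (e.symm j ∈ row (e.symm i))

theorem onesCount_matrixOfRows (e : ι ≃ Fin n) (row : ι → Finset ι) :
    onesCount (matrixOfRows e row) = ∑ i, #(row i) := by
  rw [← card_sigma, onesCount]
  refine card_equiv ((e.prodCongr e).symm.trans (Equiv.sigmaEquivProd ι ι).symm) ?_
  simp [matrixOfRows]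

theorem minorHit_matrixOfRows (e : ι ≃ Fin n) (row : ι → Finset ι) {k : ℕ}
    (hrow : ∀ S : Finset ι, #S = k → n < k + #(S.biUnion row)) :
    MinorHit n k (matrixOfRows e row) := by
  intro S T hS hT
  by_contra! hzero
  set S' := S.map e.symm.toEmbedding
  set T' := T.map e.symm.toEmbedding
  have hdisj : Disjoint (S'.biUnion row) T' := by
    simp only [disjoint_left, mem_biUnion, S', T', mem_map_equiv, Equiv.symm_symm]
    rintro _ ⟨i, hi, hj⟩ hjT
    simpa [matrixOfRows, hj] using hzero _ hi _ hjT
  have hcard := card_le_univ (S'.biUnion row ∪ T')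
  rw [card_union_of_disjoint hdisj, Fintype.card_congr e, Fintype.card_fin, card_map, hT]
    at hcard
  have := hrow S' (by rw [card_map, hS])
  omega

end MatrixOfRows

section IdentityCirculant

variable {α : Type*} {m : ℕ}

variable (α m) in
def identityCirculantRow : α ⊕ ZMod m → Finset (α ⊕ ZMod m)
  | .inl a => {.inl a}
  | .inr r => ({r} + {0, 1, 2} : Finset (ZMod m)).map .inr

theorem sum_card_identityCirculantRow_le [Fintype α] [NeZero m] :
    ∑ i, #(identityCirculantRow α m i) ≤ Fintype.card α + 3 * m := by
  rw [Fintype.sum_sum_type]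
  gcongr
  · simp [identityCirculantRow]
  · refine (sum_le_sum fun r _ => (?_ : _ ≤ 3)).trans_eq (by simp [mul_comm])
    simpa [identityCirculantRow] using card_le_three

theorem biUnion_identityCirculantRow [DecidableEq α] (S : Finset (α ⊕ ZMod m)) :
    S.biUnion (identityCirculantRow α m) = S.toLeft.disjSum (S.toRight + {0, 1, 2}) := by
  ext (a | r) <;> simp [identityCirculantRow, mem_add]

theorem card_add_two_le_card_biUnion_identityCirculantRow [DecidableEq α] [NeZero m]
    {S : Finset (α ⊕ ZMod m)} (hS : S.toRight.Nonempty) (hm : #S.toRight + 2 ≤ m) :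
    #S + 2 ≤ #(S.biUnion (identityCirculantRow α m)) := by
  rw [biUnion_identityCirculantRow, card_disjSum, ← card_toLeft_add_card_toRight]
  have := ZMod.min_le_card_add_zero_one_two hS
  omega

end IdentityCirculant

theorem alpha_le_four_k_plus_five (k : ℕ) (hk : 1 ≤ k) :
    alpha k (2 * k + 1) ≤ 4 * k + 5 := by
  let e : Fin (k - 1) ⊕ ZMod (k + 2) ≃ Fin (2 * k + 1) :=
    Fintype.equivOfCardEq (by simp only [Fintype.card_sum, Fintype.card_fin, ZMod.card]; omega)
  have hcover : ∀ S : Finset (Fin (k - 1) ⊕ ZMod (k + 2)), #S = k →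
      2 * k + 1 < k + #(S.biUnion (identityCirculantRow _ _)) := by
    intro S hS
    have hleft : #S.toLeft ≤ k - 1 := by simpa using card_le_univ S.toLeft
    have hsplit := card_toLeft_add_card_toRight (u := S)
    have := card_add_two_le_card_biUnion_identityCirculantRow (S := S)
      (card_pos.mp (by omega)) (by omega)
    omega
  calc alpha k (2 * k + 1)
      ≤ onesCount (matrixOfRows e (identityCirculantRow _ _)) :=
        alpha_le_onesCount (minorHit_matrixOfRows e _ hcover)
    _ = ∑ i, #(identityCirculantRow (Fin (k - 1)) (k + 2) i) := onesCount_matrixOfRows e _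
    _ ≤ (k - 1) + 3 * (k + 2) := by
        simpa using sum_card_identityCirculantRow_le (α := Fin (k - 1)) (m := k + 2)
    _ = 4 * k + 5 := by omega
end

section
/- Let k ≥ 1 and n = 2k+1, and let α(k,n) be the minimum number of 1-entries in an n×n {0,1}-matrix in which every k×k minor contains a 1. Then α(k, 2k+1) ≤ (7k+11)/2 if k is odd, and α(k, 2k+1) ≤ (7k+12)/2 if k is even. -/
open Finset

section HitColumns

variable {ι : Type*} [Fintype ι]

def hitCols (A : ι → ι → Bool) (S : Finset ι) : Finset ι := {j | ∃ i ∈ S, A i j = true}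

@[simp]
lemma mem_hitCols {A : ι → ι → Bool} {S : Finset ι} {j : ι} :
    j ∈ hitCols A S ↔ ∃ i ∈ S, A i j = true := by
  simp [hitCols]

def numOnes (A : ι → ι → Bool) : ℕ := ∑ i, ∑ j, if A i j then 1 else 0

lemma exists_one_in_minor_of_card_lt (A : ι → ι → Bool) {S T : Finset ι}
    (h : Fintype.card ι < #T + #(hitCols A S)) : ∃ i ∈ S, ∃ j ∈ T, A i j = true := by
  classical
  obtain ⟨j, hj⟩ := inter_nonempty_of_card_lt_card_add_card (subset_univ T)
    (subset_univ (hitCols A S)) (by rwa [card_univ])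
  obtain ⟨hjT, hjS⟩ := mem_inter.mp hj
  obtain ⟨i, hi, hij⟩ := mem_hitCols.mp hjS
  exact ⟨i, hi, j, hjT, hij⟩

theorem alpha_le_numOnes {k : ℕ} (A : ι → ι → Bool)
    (hA : ∀ S : Finset ι, #S = k → Fintype.card ι < k + #(hitCols A S)) :
    alpha k (Fintype.card ι) ≤ numOnes A := by
  let e := Fintype.equivFin ι
  refine Nat.sInf_le ⟨fun i j => A (e.symm i) (e.symm j), ?_, ?_⟩
  · intro S T hS hT
    obtain ⟨i, hi, j, hj, hij⟩ := exists_one_in_minor_of_card_lt A (S := S.map e.symm.toEmbedding)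
      (T := T.map e.symm.toEmbedding) (by simpa [hT] using hA _ (by simpa using hS))
    simp only [mem_map_equiv, Equiv.symm_symm] at hi hj
    exact ⟨e i, hi, e j, hj, by simpa using hij⟩
  · rw [onesCount, card_filter, Fintype.sum_prod_type, numOnes, ← e.symm.sum_comp]
    simp only [← e.symm.sum_comp]

lemma alpha_le_mul_self {k : ℕ} (hk : 0 < k) (n : ℕ) : alpha k n ≤ n * n := by
  simpa [numOnes] using alpha_le_numOnes (k := k) (fun _ _ : Fin n => true) fun S hS => by
    obtain ⟨i, hi⟩ := card_pos.mp (hS ▸ hk)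
    have : hitCols (fun _ _ : Fin n => true) S = univ := by
      ext j; simpa using ⟨i, hi⟩
    simp [this, hk]

end HitColumns

section BlockDiag

variable {α β : Type*} [Fintype α] [Fintype β]

def blockDiag (B : α → α → Bool) (C : β → β → Bool) : α ⊕ β → α ⊕ β → Bool
  | .inl a, .inl a' => B a a'
  | .inr b, .inr b' => C b b'
  | _, _ => false

lemma hitCols_blockDiag (B : α → α → Bool) (C : β → β → Bool) (S : Finset (α ⊕ β)) :
    hitCols (blockDiag B C) S = (hitCols B S.toLeft).disjSum (hitCols C S.toRight) := by
  ext (j | j) <;> simp [Sum.exists, blockDiag]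

lemma numOnes_blockDiag (B : α → α → Bool) (C : β → β → Bool) :
    numOnes (blockDiag B C) = numOnes B + numOnes C := by
  simp only [numOnes, blockDiag, Fintype.sum_sum_type]
  simp only [Bool.false_eq_true, ↓reduceIte, sum_const_zero, add_zero, zero_add]
  rfl

lemma hitCols_decide_eq [DecidableEq α] (S : Finset α) :
    hitCols (fun i j : α => decide (i = j)) S = S := by
  ext; simp

lemma numOnes_decide_eq [DecidableEq α] :
    numOnes (fun i j : α => decide (i = j)) = Fintype.card α := by
  simp [numOnes]

end BlockDiag

section Cyclic

lemma ZMod.val_sub_sub_natCast_of_lt {m : ℕ} (e : ZMod m) {j : ℕ} (hj : j < m) :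
    (e - (e - j)).val = j := by
  rw [sub_sub_cancel, ZMod.val_cast_of_lt hj]

lemma Nat.card_filter_range_succ_dvd (N g : ℕ) : #{x ∈ range (N + 1) | g ∣ x} = N / g + 1 := by
  rw [← Nat.card_multiples' N g, ← card_insert_of_notMem (s := {x ∈ range N.succ | x ≠ 0 ∧ g ∣ x})
    (a := 0) (by simp)]
  congr 1
  ext x
  by_cases hx : x = 0 <;> simp [hx]

lemma ZMod.card_filter_dvd_val (N g : ℕ) :
    #{j : ZMod (N + 1) | g ∣ j.val} = N / g + 1 := by
  rw [← Nat.card_filter_range_succ_dvd]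
  refine card_nbij ZMod.val (fun j hj => ?_) (fun a _ b _ hab => ZMod.val_injective _ hab) ?_
  · simp only [mem_coe, mem_filter, mem_univ, true_and, mem_range] at hj ⊢
    exact ⟨ZMod.val_lt j, hj⟩
  · intro x hx
    simp only [mem_coe, mem_filter, mem_range] at hx
    exact ⟨x, by simpa [ZMod.val_cast_of_lt hx.1] using hx.2, ZMod.val_cast_of_lt hx.1⟩

variable {m : ℕ} [NeZero m]

/-- `T` is the cyclic interval of length `#T` ending at `e`. -/
lemma ZMod.mem_iff_val_sub_lt_card {T : Finset (ZMod m)} {e : ZMod m}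
    (hT : ∀ x ∈ T, x ≠ e → x + 1 ∈ T) (y : ZMod m) : y ∈ T ↔ (e - y).val < #T := by
  have hwalk : ∀ x ∈ T, ∀ i ≤ (e - x).val, x + i ∈ T := by
    intro x hx i hi
    induction i with
    | zero => simpa using hx
    | succ i ih =>
      have hne : x + i ≠ e := by
        intro hxe
        have : (e - x).val = i := by
          rw [← hxe, add_sub_cancel_left, ZMod.val_cast_of_lt (by linarith [ZMod.val_lt (e - x)])]
        omega
      simpa [add_assoc] using hT _ (ih (by omega)) hne
  have hdown : ∀ x ∈ T, ∀ z, (e - z).val ≤ (e - x).val → z ∈ T := by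
    intro x hx z hz
    convert hwalk x hx _ (Nat.sub_le _ (e - z).val) using 1
    rw [Nat.cast_sub hz, ZMod.natCast_zmod_val, ZMod.natCast_zmod_val]
    ring
  constructor
  · intro hy
    by_contra! hty
    have hym := ZMod.val_lt (e - y)
    have := card_le_card_of_injOn (fun j : ℕ => e - j) (s := range (#T + 1)) (t := T)
      (fun j hj => hdown y hy _ <| by
        rw [ZMod.val_sub_sub_natCast_of_lt] <;> simp at hj <;> omega)
      (fun a ha b hb hab => by
        simp only [coe_range, Set.mem_Iio] at ha hb
        simpa [ZMod.val_cast_of_lt (show a < m by omega), ZMod.val_cast_of_lt (show b < m by omega)]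
          using congrArg ZMod.val (sub_right_injective hab))
    simp at this
  · intro hy
    by_contra hyT
    have hlt : ∀ z ∈ T, (e - z).val < (e - y).val := fun z hz =>
      not_le.mp fun h => hyT (hdown z hz y h)
    have := card_le_card_of_injOn (fun z => (e - z).val) (t := range (e - y).val)
      (fun z hz => mem_range.mpr (hlt z hz))
      (fun a _ b _ hab => sub_right_injective (ZMod.val_injective m hab))
    simp at this
    omega

lemma ZMod.exists_dvd_val_sub {g : ℕ} (hg : 0 < g) (x : ZMod m) :
    ∃ i < g, g ∣ (x - i).val := by
  have hle : x.val % g ≤ x.val := Nat.mod_le _ _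
  refine ⟨x.val % g, Nat.mod_lt _ hg, ?_⟩
  rw [ZMod.val_sub (by rwa [ZMod.val_cast_of_lt (by linarith [ZMod.val_lt x])]),
    ZMod.val_cast_of_lt (by linarith [ZMod.val_lt x])]
  exact Nat.dvd_sub_mod _

end Cyclic

section CycleWithChords

def cycleWithChords (m g h : ℕ) (i j : ZMod m) : Bool :=
  decide (i = j ∨ i = j + 1 ∨ (g ∣ j.val ∧ i = j + h))

variable {m : ℕ} [NeZero m]

lemma mem_hitCols_cycleWithChords {g h : ℕ} {S : Finset (ZMod m)} {j : ZMod m} :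
    j ∈ hitCols (cycleWithChords m g h) S ↔ j ∈ S ∨ j + 1 ∈ S ∨ (g ∣ j.val ∧ j + h ∈ S) := by
  simp only [mem_hitCols, cycleWithChords, decide_eq_true_eq]
  aesop

/- If `T` has a single exit `e`, it is the cyclic interval ending at `e`. One of the `g`
consecutive points `e - j`, `max 1 (#T + 1 - h) ≤ j`, is a multiple of `g`, and as `-h = h - 1`
its chord lands `j + h - 1 ≥ #T` steps behind `e`, outside `T`. -/
lemma exists_pair_leaving {g h : ℕ} (hm : m + 1 = 2 * h) (hg : 0 < g) (hgh : g < h)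
    (T : Finset (ZMod m)) (hT : g < #T) (hTm : #T + g ≤ m) :
    ∃ x ∈ T, ∃ y ∈ T, x ≠ y ∧ (x + 1 ∉ T ∨ (g ∣ x.val ∧ x + h ∉ T)) ∧
      (y + 1 ∉ T ∨ (g ∣ y.val ∧ y + h ∉ T)) := by
  by_cases htwo : ∃ x ∈ T, ∃ y ∈ T, x ≠ y ∧ x + 1 ∉ T ∧ y + 1 ∉ T
  · obtain ⟨x, hx, y, hy, hxy, hx1, hy1⟩ := htwo
    exact ⟨x, hx, y, hy, hxy, .inl hx1, .inl hy1⟩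
  obtain ⟨e, he, hstep⟩ : ∃ e ∈ T, ∀ x ∈ T, x ≠ e → x + 1 ∈ T := by
    by_cases hexit : ∃ e ∈ T, e + 1 ∉ T
    · obtain ⟨e, he, he1⟩ := hexit
      refine ⟨e, he, fun x hx hxe => ?_⟩
      by_contra hx1
      exact htwo ⟨x, hx, e, he, hxe, hx1, he1⟩
    · obtain ⟨e, he⟩ := card_pos.mp (by omega : 0 < #T)
      exact ⟨e, he, fun x hx _ => by_contra fun hx1 => hexit ⟨x, hx, hx1⟩⟩
  have hmem := ZMod.mem_iff_val_sub_lt_card hstep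
  have hcast : ((m : ℕ) : ZMod m) = 0 := ZMod.natCast_self m
  have he1 : e + 1 ∉ T := by
    have hm1 : e + 1 = e - ((m - 1 : ℕ) : ZMod m) := by
      rw [Nat.cast_sub (by omega), hcast]; ring
    rw [hmem, hm1, ZMod.val_sub_sub_natCast_of_lt e (by omega)]
    omega
  obtain ⟨lo, hlo⟩ : ∃ lo, lo = max 1 (#T + 1 - h) := ⟨_, rfl⟩
  obtain ⟨i, hig, hdvd⟩ := ZMod.exists_dvd_val_sub (m := m) hg (e - lo)
  obtain ⟨j, hj⟩ : ∃ j, j = lo + i := ⟨_, rfl⟩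
  rw [sub_sub, ← Nat.cast_add, ← hj] at hdvd
  have hsucc : e - (j : ZMod m) + 1 = e - ((j - 1 : ℕ) : ZMod m) := by
    rw [Nat.cast_sub (by omega)]; ring
  have hchord : e - (j : ZMod m) + h = e - ((j + h - 1 : ℕ) : ZMod m) := by
    have : ((m + 1 : ℕ) : ZMod m) = ((2 * h : ℕ) : ZMod m) := by rw [hm]
    rw [Nat.cast_sub (by omega)]
    push_cast at this ⊢
    linear_combination (-1 : ZMod m) * this + hcast
  have hsuccT : e - (j : ZMod m) + 1 ∈ T := by
    rw [hmem, hsucc, ZMod.val_sub_sub_natCast_of_lt e (by omega)]; omega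
  refine ⟨e, he, e - j, ?_, fun hej => he1 (hej ▸ hsuccT), .inl he1, .inr ⟨hdvd, ?_⟩⟩
  · rw [hmem, ZMod.val_sub_sub_natCast_of_lt e (by omega)]; omega
  · rw [hmem, hchord, ZMod.val_sub_sub_natCast_of_lt e (by omega)]; omega

lemma card_add_two_le_card_hitCols_cycleWithChords {g h : ℕ} (hm : m + 1 = 2 * h)
    (hg : 0 < g) (hgh : g < h) (S : Finset (ZMod m)) (hS : g ≤ #S) (hSm : #S + g < m) :
    #S + 2 ≤ #(hitCols (cycleWithChords m g h) S) := by
  obtain ⟨x, hx, y, hy, hxy, hxS, hyS⟩ :=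
    exists_pair_leaving hm hg hgh Sᶜ (by rw [card_compl, ZMod.card]; omega)
      (by rw [card_compl, ZMod.card]; omega)
  simp only [mem_compl, not_not] at hx hy hxS hyS
  have hsub : insert x (insert y S) ⊆ hitCols (cycleWithChords m g h) S := by
    intro z hz
    simp only [mem_insert] at hz
    rcases hz with rfl | rfl | hz <;> rw [mem_hitCols_cycleWithChords] <;> tauto
  calc #S + 2 = #(insert x (insert y S)) := by
        rw [card_insert_of_notMem (by simp [hxy, hx]), card_insert_of_notMem hy]
    _ ≤ _ := card_le_card hsub

lemma numOnes_cycleWithChords_le (g h : ℕ) :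
    numOnes (cycleWithChords m g h) ≤ 2 * m + #{j : ZMod m | g ∣ j.val} := by
  have hcol (j : ZMod m) : (∑ i, if cycleWithChords m g h i j then 1 else 0) ≤
      ∑ i : ZMod m, ((if i = j then 1 else 0) + (if i = j + 1 then 1 else 0) +
        (if g ∣ j.val then if i = j + h then 1 else 0 else 0)) := by
    refine sum_le_sum fun i _ => ?_
    simp only [cycleWithChords, decide_eq_true_eq]
    split_ifs <;> simp_all
  rw [numOnes, sum_comm]
  refine (sum_le_sum fun j _ => hcol j).trans ?_
  simp only [sum_add_distrib, sum_ite_eq', mem_univ, if_true, card_filter, sum_ite_irrel,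
    sum_const_zero, sum_const, card_univ, ZMod.card, smul_eq_mul, mul_one]
  omega

end CycleWithChords

theorem alpha_le_of_even_add {k g : ℕ} (hg : 0 < g) (hgk : g ≤ k) (hkg : Even (k + g)) :
    alpha k (2 * k + 1) ≤ (k - g) + 2 * (k + g + 1) + ((k + g) / g + 1) := by
  obtain ⟨r, hr⟩ := hkg
  let A := blockDiag (fun i j : Fin (k - g) => decide (i = j))
    (cycleWithChords (k + g + 1) g (r + 1))
  have hcard : Fintype.card (Fin (k - g) ⊕ ZMod (k + g + 1)) = 2 * k + 1 := by
    simp only [Fintype.card_sum, Fintype.card_fin, ZMod.card]; omega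
  have hA : ∀ S, #S = k → Fintype.card (Fin (k - g) ⊕ ZMod (k + g + 1)) < k + #(hitCols A S) := by
    intro S hS
    have hsplit := card_toLeft_add_card_toRight (u := S)
    have hleft : #S.toLeft ≤ k - g := by simpa using card_le_univ S.toLeft
    have hright := card_add_two_le_card_hitCols_cycleWithChords (m := k + g + 1) (h := r + 1)
      (by omega) hg (by omega) S.toRight (by omega) (by omega)
    rw [hitCols_blockDiag, card_disjSum, hitCols_decide_eq, hcard]
    omega
  calc alpha k (2 * k + 1) = alpha k (Fintype.card (Fin (k - g) ⊕ ZMod (k + g + 1))) := by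
        rw [hcard]
    _ ≤ numOnes A := alpha_le_numOnes A hA
    _ ≤ (k - g) + 2 * (k + g + 1) + ((k + g) / g + 1) := by
        have hcycle := numOnes_cycleWithChords_le (m := k + g + 1) g (r + 1)
        rw [ZMod.card_filter_dvd_val] at hcycle
        rw [numOnes_blockDiag, numOnes_decide_eq, Fintype.card_fin]
        omega

/-- For `k = 3` the construction of `alpha_le_of_even_add` needs 17 ones. -/
def sevenBySeven (i j : Fin 7) : Bool :=
  decide ((i.val, j.val) ∈ [(0, 0), (0, 5), (1, 2), (1, 3), (2, 4), (3, 0), (3, 2), (3, 6),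
    (4, 1), (4, 2), (4, 5), (5, 0), (5, 1), (5, 3), (6, 1), (6, 6)])

set_option maxRecDepth 10000 in
lemma alpha_three_seven_le : alpha 3 7 ≤ 16 := by
  have := alpha_le_numOnes sevenBySeven (k := 3) (by decide)
  rw [Fintype.card_fin] at this
  exact this.trans_eq (by decide)

theorem alpha_le_seven_halves (k : ℕ) (hk : 1 ≤ k) :
    (Odd k → alpha k (2 * k + 1) ≤ (7 * k + 11) / 2) ∧
    (Even k → alpha k (2 * k + 1) ≤ (7 * k + 12) / 2) := by
  refine ⟨fun ⟨r, hr⟩ => ?_, fun ⟨r, hr⟩ => ?_⟩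
  · obtain rfl | rfl | hk5 : k = 1 ∨ k = 3 ∨ 5 ≤ k := by omega
    · exact alpha_le_mul_self one_pos 3
    · exact alpha_three_seven_le
    · have := alpha_le_of_even_add (k := k) (g := 3) (by norm_num) (by omega) ⟨r + 2, by omega⟩
      omega
  · have := alpha_le_of_even_add (k := k) (g := 2) (by norm_num) (by omega) ⟨r + 1, by omega⟩
    omega
end

section
/- Let α(k, 2k+1) denote the minimum number of ones in a (2k+1)×(2k+1) {0,1}-matrix in which every k×k minor contains a 1. For every positive integer a there exists a constant C(a) such that α(k, 2k+1) ≤ ((3a+1)k + C(a))/a for all k ≥ 1; consequently limsup_{k→∞} α(k,2k+1)/k ≤ 3. -/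
open Finset Filter

section RelImage

variable {α β γ δ : Type*}

def relImage [Fintype β] (R : α → β → Prop) [DecidableRel R] (S : Finset α) : Finset β :=
  {y | ∃ x ∈ S, R x y}

@[simp]
theorem mem_relImage [Fintype β] {R : α → β → Prop} [DecidableRel R] {S : Finset α}
    {y : β} :
    y ∈ relImage R S ↔ ∃ x ∈ S, R x y := by
  simp [relImage]

theorem relImage_eq_self [Fintype α] [DecidableEq α] (S : Finset α) :
    relImage (· = ·) S = S := by
  ext; simp

theorem relImage_liftRel [Fintype γ] [Fintype δ] (r : α → γ → Prop) (s : β → δ → Prop)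
    [DecidableRel r] [DecidableRel s] (S : Finset (α ⊕ β)) :
    relImage (Sum.LiftRel r s) S = (relImage r S.toLeft).disjSum (relImage s S.toRight) := by
  ext (y | y) <;> simp

theorem sum_sum_ite_liftRel [Fintype α] [Fintype β] [Fintype γ] [Fintype δ]
    (r : α → γ → Prop) (s : β → δ → Prop) [DecidableRel r] [DecidableRel s] :
    ∑ x, ∑ y, (if Sum.LiftRel r s x y then 1 else 0 : ℕ) =
      ∑ x, ∑ y, (if r x y then 1 else 0) + ∑ x, ∑ y, if s x y then 1 else 0 := by
  simp only [Fintype.sum_sum_type, Sum.liftRel_inl_inl, Sum.liftRel_inr_inr,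
    Sum.not_liftRel_inl_inr, Sum.not_liftRel_inr_inl, if_false, sum_const_zero, add_zero, zero_add]

end RelImage

section Transfer

variable {α : Type*} [Fintype α] {n k : ℕ}

theorem minorHit_of_rel [DecidableEq α] (e : Fin n ≃ α) (R : α → α → Prop)
    [DecidableRel R] (hR : ∀ S : Finset α, #S = k → n < k + #(relImage R S)) :
    MinorHit n k fun i j => decide (R (e i) (e j)) := by
  intro S T hS hT
  by_contra! hST
  have hdisj : Disjoint (T.map e.toEmbedding) (relImage R (S.map e.toEmbedding)) := by
    simp only [disjoint_left, mem_map_equiv, mem_relImage]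
    rintro _ hy ⟨_, hx, hxy⟩
    simpa using hST _ hx _ hy (by simpa using hxy)
  have hcard := card_le_univ (T.map e.toEmbedding ∪ relImage R (S.map e.toEmbedding))
  rw [card_union_of_disjoint hdisj, card_map, ← Fintype.card_congr e, Fintype.card_fin] at hcard
  have := hR (S.map e.toEmbedding) (by rw [card_map, hS])
  omega

theorem onesCount_of_rel (e : Fin n ≃ α) (R : α → α → Prop) [DecidableRel R] :
    onesCount (fun i j => decide (R (e i) (e j))) = ∑ x, ∑ y, if R x y then 1 else 0 := by
  simp only [onesCount, card_filter, Fintype.sum_prod_type, decide_eq_true_eq]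
  rw [← e.sum_comp]
  exact Fintype.sum_congr _ _ fun i => e.sum_comp fun y => if R (e i) y then 1 else 0

theorem alpha_le_of_rel [DecidableEq α] (hα : Fintype.card α = n) (R : α → α → Prop)
    [DecidableRel R] (hR : ∀ S : Finset α, #S = k → n < k + #(relImage R S)) :
    alpha k n ≤ ∑ x, ∑ y, if R x y then 1 else 0 := by
  let e := (Fintype.equivFinOfCardEq hα).symm
  rw [← onesCount_of_rel e R]
  exact Nat.sInf_le ⟨_, minorHit_of_rel e R hR, rfl⟩

end Transfer

theorem alpha_le_sq {k : ℕ} (n : ℕ) (hk : 1 ≤ k) : alpha k n ≤ n * n := by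
  let full : Fin n → Fin n → Prop := fun _ _ => True
  refine (alpha_le_of_rel (Fintype.card_fin n) full fun S hS => ?_).trans (by simp [full])
  obtain ⟨x, hx⟩ : S.Nonempty := card_pos.1 (by omega)
  have : relImage full S = univ := eq_univ_of_forall fun _ => by simpa [full] using ⟨x, hx⟩
  simp only [this, card_univ, Fintype.card_fin]
  omega

namespace ZMod

variable {v : ℕ}

abbrev circulantRel (a : ℕ) (x y : ZMod v) : Prop :=
  y = x ∨ y = x + 1 ∨ (a ∣ x.val ∧ y = x + (a + 1 : ℕ))

theorem exists_run_end {H : Finset (ZMod v)} {x : ZMod v} (hx : x ∈ H) {m : ℕ}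
    (hm : x + m ∉ H) : ∃ d < m, (∀ e ≤ d, x + e ∈ H) ∧ x + d + 1 ∉ H := by
  have hm0 : m ≠ 0 := by rintro rfl; simp_all
  have hex : ∃ d : ℕ, x + (d + 1 : ℕ) ∉ H :=
    ⟨m - 1, by rwa [Nat.sub_add_cancel (by omega)]⟩
  classical
  refine ⟨Nat.find hex, ?_, fun e he => ?_, by simpa [add_assoc] using Nat.find_spec hex⟩
  · have := Nat.find_min' hex (m := m - 1) (by rwa [Nat.sub_add_cancel (by omega)])
    omega
  · cases e with
    | zero => simpa using hx
    | succ e => simpa using Nat.find_min hex (m := e) (by omega)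

theorem card_image_add_range (x : ZMod v) {d : ℕ} (hd : d ≤ v) :
    #((range d).image fun e : ℕ => x + e) = d := by
  rw [card_image_of_injOn, card_range]
  intro e he e' he' h
  simp only [coe_range, Set.mem_Iio] at he he'
  simpa [Nat.mod_eq_of_lt, he.trans_le hd, he'.trans_le hd] using
    (natCast_eq_natCast_iff' e e' v).1 (add_left_cancel h)

theorem eq_arc_of_unique_run_end [NeZero v] {H : Finset (ZMod v)} {u z : ZMod v} (hz : z ∉ H)
    (hu : ∀ y ∈ H, y + 1 ∉ H → y = u) : H = (range #H).image fun d : ℕ => u - d := by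
  refine eq_of_subset_of_card_le (fun x hx => ?_) (card_image_le.trans (card_range _).le)
  have hzx : x + (z - x).val ∉ H := by simpa using hz
  obtain ⟨d, hdv, hrun, hend⟩ := exists_run_end hx hzx
  have hd : d + 1 ≤ #H := by
    have hdv' := (z - x).val_lt
    rw [← card_image_add_range x (d := d + 1) (by omega)]
    exact card_le_card fun y hy => by
      obtain ⟨e, he, rfl⟩ := mem_image.1 hy
      exact hrun e (by simp at he; omega)
  refine mem_image.2 ⟨d, mem_range.2 (by omega), ?_⟩
  rw [← hu _ (hrun d le_rfl) hend]
  ring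

theorem add_notMem_of_eq_arc {H : Finset (ZMod v)} {u : ZMod v}
    (harc : H = (range #H).image fun d : ℕ => u - d) {c : ℕ} (hc : 0 < c) (hcv : #H + c ≤ v) :
    u + c ∉ H := by
  rw [harc, mem_image]
  rintro ⟨e, he, hce⟩
  have : ((c + e : ℕ) : ZMod v) = 0 := by push_cast; linear_combination hce.symm
  have := Nat.le_of_dvd (by omega) ((ZMod.natCast_eq_zero_iff _ _).1 this)
  rw [mem_range] at he
  omega

variable [NeZero v]

theorem exists_chord_notMem_of_eq_arc {a : ℕ} (ha : 0 < a) {H : Finset (ZMod v)} {u : ZMod v}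
    (harc : H = (range #H).image fun d : ℕ => u - d) (haH : a ≤ #H) (hHv : #H + a + 1 ≤ v) :
    ∃ x ∈ H, a ∣ x.val ∧ x + (a + 1 : ℕ) ∉ H ∧ x + (a + 1 : ℕ) ≠ u + 1 := by
  set i := u.val % a
  have hia : i < a := Nat.mod_lt _ ha
  have hiv : ((i : ℕ) : ZMod v).val = i :=
    ZMod.val_natCast_of_lt ((Nat.mod_le _ _).trans_lt u.val_lt)
  have hjump : u - i + (a + 1 : ℕ) = u + (a - i : ℕ) + 1 := by
    push_cast [Nat.cast_sub hia.le]; ring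
  have hu : u ∈ H := by rw [harc]; exact mem_image.2 ⟨0, mem_range.2 (by omega), by simp⟩
  refine ⟨u - i, ?_, ?_, ?_, fun h => ?_⟩
  · rw [harc]; exact mem_image.2 ⟨i, mem_range.2 (by omega), rfl⟩
  · rw [ZMod.val_sub (hiv.trans_le (Nat.mod_le _ _)), hiv]
    exact Nat.dvd_sub_mod _
  · rw [hjump, add_assoc, ← Nat.cast_one, ← Nat.cast_add]
    exact add_notMem_of_eq_arc harc (by omega) (by omega)
  · rw [hjump, add_left_inj] at h
    exact add_notMem_of_eq_arc harc (c := a - i) (by omega) (by omega) (by rwa [h])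

theorem add_two_le_card_relImage_circulantRel {a : ℕ} (ha : 0 < a) {H : Finset (ZMod v)}
    (haH : a ≤ #H) (hHv : #H + a + 1 ≤ v) : #H + 2 ≤ #(relImage (circulantRel a) H) := by
  set N := relImage (circulantRel a) H
  suffices hpq : ∃ p ∈ N \ H, ∃ q ∈ N \ H, p ≠ q by
    have hsub : H ⊆ N := fun x hx => mem_relImage.2 ⟨x, hx, .inl rfl⟩
    have := card_sdiff_add_card_eq_card hsub
    have := one_lt_card.2 hpq
    omega
  have hsucc : ∀ y ∈ H, y + 1 ∉ H → y + 1 ∈ N \ H := fun y hy hy1 =>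
    mem_sdiff.2 ⟨mem_relImage.2 ⟨y, hy, .inr (.inl rfl)⟩, hy1⟩
  obtain ⟨z, -, hz⟩ := exists_mem_notMem_of_card_lt_card (s := H) (t := univ)
    (by rw [card_univ, ZMod.card]; omega)
  obtain ⟨x₀, hx₀⟩ : H.Nonempty := card_pos.1 (by omega)
  obtain ⟨d, -, hrun, hend⟩ := exists_run_end hx₀ (m := (z - x₀).val) (by simpa using hz)
  set u := x₀ + d
  have hu1 := hsucc u (hrun d le_rfl) hend
  by_cases huniq : ∃ y ∈ H, y + 1 ∉ H ∧ y ≠ u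
  · obtain ⟨y, hy, hy1, hyu⟩ := huniq
    exact ⟨u + 1, hu1, y + 1, hsucc y hy hy1, fun h => hyu (add_right_cancel h).symm⟩
  push Not at huniq
  obtain ⟨x, hx, hxa, hxH, hxu⟩ :=
    exists_chord_notMem_of_eq_arc ha (eq_arc_of_unique_run_end hz huniq) haH hHv
  have hchord : x + (a + 1 : ℕ) ∈ N := mem_relImage.2 ⟨x, hx, .inr (.inr ⟨hxa, rfl⟩)⟩
  exact ⟨u + 1, hu1, _, mem_sdiff.2 ⟨hchord, hxH⟩, hxu.symm⟩

theorem card_filter_dvd_val_le (a : ℕ) : #{x : ZMod v | a ∣ x.val} ≤ v / a + 1 := by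
  calc #{x : ZMod v | a ∣ x.val} ≤ #(insert (0 : ℕ) {m ∈ Ioc 0 v | a ∣ m}) := by
        refine card_le_card_of_injOn val (fun x hx => ?_) fun x _ y _ h => val_injective v h
        have := x.val_lt
        simp only [coe_filter, mem_univ, true_and, Set.mem_ofPred_eq] at hx
        simp only [coe_insert, coe_filter, mem_Ioc, Set.mem_insert_iff, Set.mem_ofPred_eq]
        omega
    _ ≤ v / a + 1 := by
        rw [← Nat.Ioc_filter_dvd_card_eq_div v a]
        exact card_insert_le _ _

theorem sum_sum_ite_circulantRel_le (a : ℕ) :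
    ∑ x : ZMod v, ∑ y, (if circulantRel a x y then 1 else 0) ≤ 2 * v + (v / a + 1) := by
  calc ∑ x : ZMod v, ∑ y, (if circulantRel a x y then 1 else 0)
      ≤ ∑ x : ZMod v, ∑ y, ((if y = x then 1 else 0) + (if y = x + 1 then 1 else 0) +
          if a ∣ x.val ∧ y = x + (a + 1 : ℕ) then 1 else 0) := by
        gcongr with x _ y
        simp only [circulantRel]
        split_ifs <;> simp_all
    _ = ∑ x : ZMod v, (2 + if a ∣ x.val then 1 else 0) := by
        simp [sum_add_distrib, ite_and]
    _ ≤ 2 * v + (v / a + 1) := by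
        have := card_filter_dvd_val_le (v := v) a
        simp only [sum_add_distrib, sum_boole, sum_const, card_univ, ZMod.card, smul_eq_mul,
          Nat.cast_id]
        omega

end ZMod

theorem alpha_two_mul_add_one_le {a k : ℕ} (ha : 0 < a) (hak : a ≤ k) :
    alpha k (2 * k + 1) ≤ (k - a) + (2 * (k + 1 + a) + ((k + 1 + a) / a + 1)) := by
  have : NeZero (k + 1 + a) := ⟨by omega⟩
  let R := Sum.LiftRel (fun i j : Fin (k - a) => i = j) (ZMod.circulantRel (v := k + 1 + a) a)
  have hcard : Fintype.card (Fin (k - a) ⊕ ZMod (k + 1 + a)) = 2 * k + 1 := by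
    simp only [Fintype.card_sum, Fintype.card_fin, ZMod.card]
    omega
  have hR : ∀ S, #S = k → 2 * k + 1 < k + #(relImage R S) := by
    intro S hS
    rw [relImage_liftRel, card_disjSum, relImage_eq_self]
    have := card_toLeft_add_card_toRight (u := S)
    have := S.toLeft.card_le_univ
    have := ZMod.add_two_le_card_relImage_circulantRel ha (H := S.toRight)
    simp only [Fintype.card_fin] at *
    omega
  calc alpha k (2 * k + 1) ≤ ∑ x, ∑ y, if R x y then 1 else 0 := alpha_le_of_rel hcard R hR
    _ = ∑ i : Fin (k - a), ∑ j, (if i = j then 1 else 0) +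
          ∑ x, ∑ y, if ZMod.circulantRel a x y then 1 else 0 := sum_sum_ite_liftRel _ _
    _ ≤ _ := by
        gcongr
        · simp
        · exact ZMod.sum_sum_ite_circulantRel_le a

theorem exists_mul_alpha_le (a : ℕ) (ha : 0 < a) :
    ∃ C : ℕ, ∀ k : ℕ, 1 ≤ k → a * alpha k (2 * k + 1) ≤ (3 * a + 1) * k + C := by
  refine ⟨a * (2 * a + 1) ^ 2 + (a ^ 2 + 4 * a + 1), fun k hk => ?_⟩
  rcases le_or_gt a k with hak | hka
  · have h := Nat.mul_le_mul_left a (alpha_two_mul_add_one_le ha hak)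
    have := Nat.div_mul_le_self (k + 1 + a) a
    obtain ⟨k, rfl⟩ := Nat.exists_eq_add_of_le hak
    simp only [Nat.add_sub_cancel_left] at h
    nlinarith
  · have := alpha_le_sq (2 * k + 1) hk
    have : (2 * k + 1) * (2 * k + 1) ≤ (2 * a + 1) ^ 2 := by nlinarith
    nlinarith

theorem limsup_div_le_of_forall_mul_le {f : ℕ → ℕ} {c : ℕ}
    (h : ∀ a : ℕ, 0 < a → ∃ C : ℕ, ∀ k : ℕ, 1 ≤ k →
      a * f k ≤ (c * a + 1) * k + C) :
    limsup (fun k : ℕ => (f k : ℝ) / k) atTop ≤ c := by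
  refine le_of_forall_pos_le_add fun ε hε => limsup_le_of_le
    (isBoundedUnder_of ⟨0, fun k => by positivity⟩).isCoboundedUnder_le ?_
  obtain ⟨a, ha⟩ := exists_nat_gt (2 / ε)
  have ha0 : (0 : ℝ) < a := (div_pos two_pos hε).trans ha
  obtain ⟨C, hC⟩ := h a (by exact_mod_cast ha0)
  filter_upwards [eventually_ge_atTop (max 1 C)] with k hk
  have hk0 : (0 : ℝ) < k := by exact_mod_cast (le_max_left _ _).trans hk
  have hCk : (C : ℝ) ≤ k := by exact_mod_cast (le_max_right _ _).trans hk
  have hfk : (a : ℝ) * f k ≤ (c * a + 1) * k + C := by exact_mod_cast hC k (by omega)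
  have hεa : 2 < ε * a := by rwa [div_lt_iff₀ hε, mul_comm] at ha
  rw [div_le_iff₀ hk0, ← mul_le_mul_iff_right₀ ha0]
  nlinarith

theorem alpha_asymptotic :
    (∀ a : ℕ, 0 < a → ∃ C : ℕ, ∀ k : ℕ, 1 ≤ k →
      a * alpha k (2 * k + 1) ≤ (3 * a + 1) * k + C) ∧
    Filter.limsup (fun k : ℕ => (alpha k (2 * k + 1) : ℝ) / k) Filter.atTop ≤ 3 :=
  ⟨exists_mul_alpha_le,
    by exact_mod_cast limsup_div_le_of_forall_mul_le (c := 3) exists_mul_alpha_le⟩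
end
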